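/- Melzak-type rotation inequality: Let R : ℝ² → ℝ² be the clockwise rotation by π/3, that is, R(a,b) = ((a + √3·b)/2, (−√3·a + b)/2). Then for all points A, B, C, P ∈ ℝ², setting T := A + R(B − A), one has ‖P − A‖ + ‖P − B‖ + ‖P − C‖ ≥ ‖C − T‖. -/
import Mathlib


/-- The point of `ℝ²` (as `EuclideanSpace ℝ (Fin 2)`) with coordinates `a`, `b`. -/
noncomputable def vec2 (a b : ℝ) : EuclideanSpace ℝ (Fin 2) :=
  (WithLp.equiv 2 (Fin 2 → ℝ)).symm ![a, b]

/-- Clockwise rotation by `π/3` in `ℝ²`: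
`R(a,b) = ((a + √3·b)/2, (−√3·a + b)/2)`. -/
noncomputable def RotCW60 (v : EuclideanSpace ℝ (Fin 2)) : EuclideanSpace ℝ (Fin 2) :=
  vec2 ((v 0 + Real.sqrt 3 * v 1) / 2) ((-(Real.sqrt 3) * v 0 + v 1) / 2)

lemma vec2_apply0 (a b : ℝ) : vec2 a b 0 = a := rfl
lemma vec2_apply1 (a b : ℝ) : vec2 a b 1 = b := rfl

lemma norm_eq2 (v : EuclideanSpace ℝ (Fin 2)) :
    ‖v‖ = Real.sqrt ((v 0)^2 + (v 1)^2) := by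
  rw [EuclideanSpace.norm_eq, Fin.sum_univ_two]
  simp [sq_abs, sq]

lemma rot_sub (u w : EuclideanSpace ℝ (Fin 2)) :
    RotCW60 u - RotCW60 w = RotCW60 (u - w) := by
  apply PiLp.ext
  intro i
  fin_cases i <;>
    simp [RotCW60, vec2, PiLp.sub_apply] <;> ring

lemma norm_rot (v : EuclideanSpace ℝ (Fin 2)) : ‖RotCW60 v‖ = ‖v‖ := by
  rw [norm_eq2, norm_eq2 v, RotCW60, vec2_apply0, vec2_apply1]
  congr 1
  have h3 : Real.sqrt 3 ^ 2 = 3 := Real.sq_sqrt (by norm_num)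
  ring_nf
  nlinarith [h3]

lemma norm_sub_rot (v : EuclideanSpace ℝ (Fin 2)) : ‖v - RotCW60 v‖ = ‖v‖ := by
  rw [norm_eq2, norm_eq2 v]
  have h0 : (v - RotCW60 v) 0 = v 0 - (v 0 + Real.sqrt 3 * v 1) / 2 := rfl
  have h1 : (v - RotCW60 v) 1 = v 1 - (-(Real.sqrt 3) * v 0 + v 1) / 2 := rfl
  rw [h0, h1]
  congr 1
  have h3 : Real.sqrt 3 ^ 2 = 3 := Real.sq_sqrt (by norm_num)
  nlinarith [h3]

/-- **Melzak-type rotation inequality**: the total length of the cone over `{A,B,C}` with vertex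
`P` is bounded below by the distance from `C` to the apex `T = A + R(B − A)` of the equilateral
triangle erected on the segment `AB`. -/
theorem stmt9 (A B C P : EuclideanSpace ℝ (Fin 2)) :
    ‖C - (A + RotCW60 (B - A))‖ ≤ ‖P - A‖ + ‖P - B‖ + ‖P - C‖ := by
  set P' : EuclideanSpace ℝ (Fin 2) := A + RotCW60 (P - A) with hP'
  set T : EuclideanSpace ℝ (Fin 2) := A + RotCW60 (B - A) with hT
  have h1 : ‖P - P'‖ = ‖P - A‖ := by
    have : P - P' = (P - A) - RotCW60 (P - A) := by
      rw [hP']; abel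
    rw [this, norm_sub_rot]
  have h2 : ‖P' - T‖ = ‖P - B‖ := by
    have : P' - T = RotCW60 (P - A) - RotCW60 (B - A) := by
      rw [hP', hT]; abel
    rw [this, rot_sub, norm_rot]
    congr 1
    abel
  calc ‖C - T‖ ≤ ‖C - P‖ + ‖P - P'‖ + ‖P' - T‖ := by
        have := norm_sub_le_norm_sub_add_norm_sub C P T
        have := norm_sub_le_norm_sub_add_norm_sub P P' T
        linarith
    _ = ‖P - A‖ + ‖P - B‖ + ‖P - C‖ := by
        rw [h1, h2, norm_sub_rev C P]; ring
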